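/- Let n ≥ 1, λ > 0 and ξ₀ ∈ Sⁿ \ {S}. Then for all ξ, η ∈ Σ_{λ,ξ₀} with ξ ≠ η one has J_{λ,ξ₀}(η)^{1/2}/|ξ − Φ_{λ,ξ₀}(η)|ⁿ − 1/|ξ − η|ⁿ < 0. -/

import Mathlib

open MeasureTheory Real Metric
open scoped RealInnerProductSpace ENNReal

noncomputable section

/-- The unit sphere `Sⁿ ⊂ ℝ^{n+1}`. -/
abbrev Sph (n : ℕ) := Metric.sphere (0 : EuclideanSpace ℝ (Fin (n + 1))) 1

/-- The surface measure on `Sⁿ`. -/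
def sphMeasure (n : ℕ) : Measure (Sph n) :=
  (volume : Measure (EuclideanSpace ℝ (Fin (n + 1)))).toSphere

/-- The constant `C_n = (4/n) π^{n/2} / Γ(n/2)`. -/
def Cconst (n : ℕ) : ℝ := (4 / n) * Real.pi ^ ((n : ℝ) / 2) / Real.Gamma ((n : ℝ) / 2)

/-- Finiteness of the double integral `∬ |v(ω)-v(η)|²/|ω-η|ⁿ`. -/
def energyFinite (n : ℕ) (v : Sph n → ℝ) : Prop :=
  ∫⁻ p : Sph n × Sph n, ENNReal.ofReal ((v p.1 - v p.2) ^ 2 / dist p.1 p.2 ^ n)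
      ∂((sphMeasure n).prod (sphMeasure n)) < ⊤

/-- The space `D`. -/
def memD (n : ℕ) (v : Sph n → ℝ) : Prop :=
  MemLp v 2 (sphMeasure n) ∧ energyFinite n v

/-- The quadratic form `E[u,v]`. -/
def energyForm (n : ℕ) (u v : Sph n → ℝ) : ℝ :=
  (1 / 2) * ∫ p : Sph n × Sph n,
      (u p.1 - u p.2) * (v p.1 - v p.2) / dist p.1 p.2 ^ n
    ∂((sphMeasure n).prod (sphMeasure n))

/-- `u` is a nonnegative weak solution of `H u = C_n u ln u`. -/
def isWeakSolution (n : ℕ) (u : Sph n → ℝ) : Prop :=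
  memD n u ∧ (∀ ω, 0 ≤ u ω) ∧
    ∀ φ : Sph n → ℝ, memD n φ →
      energyForm n φ u = Cconst n * ∫ ω, φ ω * (u ω * Real.log (u ω)) ∂(sphMeasure n)

/-- The south pole `S = -e_{n+1}`. -/
def southPole (n : ℕ) : Sph n :=
  ⟨EuclideanSpace.single (Fin.last n) (-1 : ℝ), by
    simp [mem_sphere_zero_iff_norm, EuclideanSpace.norm_single]⟩

open scoped Classical in
/-- Make a point of the sphere out of an ambient point (junk value otherwise). -/
def mkSph {n : ℕ} (x : EuclideanSpace ℝ (Fin (n + 1))) : Sph n :=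
  if h : x ∈ Metric.sphere (0 : EuclideanSpace ℝ (Fin (n + 1))) 1 then ⟨x, h⟩ else southPole n

/-- Inverse stereographic projection `𝒮 : ℝⁿ → Sⁿ`. -/
def invStereo {n : ℕ} (x : EuclideanSpace ℝ (Fin n)) : Sph n :=
  mkSph (WithLp.toLp 2 (Fin.snoc (fun i => 2 * x i / (1 + ‖x‖ ^ 2)) ((1 - ‖x‖ ^ 2) / (1 + ‖x‖ ^ 2)) :
    Fin (n + 1) → ℝ))

/-- Stereographic projection `𝒮⁻¹ : Sⁿ \ {S} → ℝⁿ` (junk value at `S`). -/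
def stereoProj {n : ℕ} (ξ : Sph n) : EuclideanSpace ℝ (Fin n) :=
  WithLp.toLp 2 (fun i => (ξ : EuclideanSpace ℝ (Fin (n + 1))) (Fin.castSucc i) /
    (1 + (ξ : EuclideanSpace ℝ (Fin (n + 1))) (Fin.last n)) : Fin n → ℝ)

/-- The Jacobian `(2/(1+|x|²))ⁿ` of the inverse stereographic projection. -/
def stereoJac (n : ℕ) (x : EuclideanSpace ℝ (Fin n)) : ℝ := (2 / (1 + ‖x‖ ^ 2)) ^ n

/-- Inversion `I_{λ,x₀}` in the sphere `∂B_λ(x₀) ⊂ ℝⁿ`. -/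
def sphereInversion {n : ℕ} (lam : ℝ) (x₀ x : EuclideanSpace ℝ (Fin n)) :
    EuclideanSpace ℝ (Fin n) :=
  (lam ^ 2 / ‖x - x₀‖ ^ 2) • (x - x₀) + x₀

/-- `|det D I_{λ,x₀}(x)| = (λ/|x-x₀|)^{2n}`. -/
def invJac (n : ℕ) (lam : ℝ) (x₀ x : EuclideanSpace ℝ (Fin n)) : ℝ :=
  (lam / ‖x - x₀‖) ^ (2 * n)

/-- The lifted inversion `Φ_{λ,ξ₀} = 𝒮 ∘ I_{λ,x₀} ∘ 𝒮⁻¹`. -/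
def PhiMap (n : ℕ) (lam : ℝ) (ξ₀ : Sph n) (η : Sph n) : Sph n :=
  invStereo (sphereInversion lam (stereoProj ξ₀) (stereoProj η))

/-- The Jacobian determinant `J_{λ,ξ₀}(η) = |det D Φ_{λ,ξ₀}(η)|`, computed through the
stereographic projection. -/
def jacPhi (n : ℕ) (lam : ℝ) (ξ₀ : Sph n) (η : Sph n) : ℝ :=
  stereoJac n (sphereInversion lam (stereoProj ξ₀) (stereoProj η)) *
    invJac n lam (stereoProj ξ₀) (stereoProj η) / stereoJac n (stereoProj η)

/-- `Σ_{λ,ξ₀} = 𝒮(B_λ(x₀)) ⊂ Sⁿ`. -/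
def SigmaSet (n : ℕ) (lam : ℝ) (ξ₀ : Sph n) : Set (Sph n) :=
  {η : Sph n | η ≠ southPole n ∧ ‖stereoProj η - stereoProj ξ₀‖ < lam}

/-- The pullback `u_{Φ_{λ,ξ₀}}(η) = J_{λ,ξ₀}(η)^{1/2} u(Φ_{λ,ξ₀}(η))`. -/
def pullPhi (n : ℕ) (lam : ℝ) (ξ₀ : Sph n) (u : Sph n → ℝ) (η : Sph n) : ℝ :=
  Real.sqrt (jacPhi n lam ξ₀ η) * u (PhiMap n lam ξ₀ η)

/-- `w` is antisymmetric with respect to `Φ_{λ,ξ₀}`. -/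
def antisymmetricPhi (n : ℕ) (lam : ℝ) (ξ₀ : Sph n) (w : Sph n → ℝ) : Prop :=
  ∀ᵐ η ∂(sphMeasure n), η ∈ SigmaSet n lam ξ₀ → w η = - pullPhi n lam ξ₀ w η

/-- Reflection `R_{α,e}` in the hyperplane `{x · e = α} ⊂ ℝⁿ`. -/
def reflMap {n : ℕ} (α : ℝ) (e x : EuclideanSpace ℝ (Fin n)) : EuclideanSpace ℝ (Fin n) :=
  x + (2 * (α - ⟪x, e⟫)) • e

/-- The lifted reflection `Ψ_{α,e} = 𝒮 ∘ R_{α,e} ∘ 𝒮⁻¹`. -/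
def PsiMap (n : ℕ) (α : ℝ) (e : EuclideanSpace ℝ (Fin n)) (η : Sph n) : Sph n :=
  invStereo (reflMap α e (stereoProj η))

/-- The Jacobian determinant `J_{α,e}(η) = |det D Ψ_{α,e}(η)|`. -/
def jacPsi (n : ℕ) (α : ℝ) (e : EuclideanSpace ℝ (Fin n)) (η : Sph n) : ℝ :=
  stereoJac n (reflMap α e (stereoProj η)) / stereoJac n (stereoProj η)

/-- `𝒮(H_{α,e}) ⊂ Sⁿ`. -/
def HSet (n : ℕ) (α : ℝ) (e : EuclideanSpace ℝ (Fin n)) : Set (Sph n) :=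
  {η : Sph n | η ≠ southPole n ∧ α < ⟪stereoProj η, e⟫}

/-- The pullback `u_{Ψ_{α,e}}(η) = J_{α,e}(η)^{1/2} u(Ψ_{α,e}(η))`. -/
def pullPsi (n : ℕ) (α : ℝ) (e : EuclideanSpace ℝ (Fin n)) (u : Sph n → ℝ) (η : Sph n) : ℝ :=
  Real.sqrt (jacPsi n α e η) * u (PsiMap n α e η)

/-- `w` is antisymmetric with respect to `Ψ_{α,e}`. -/
def antisymmetricPsi (n : ℕ) (α : ℝ) (e : EuclideanSpace ℝ (Fin n)) (w : Sph n → ℝ) : Prop :=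
  ∀ᵐ η ∂(sphMeasure n), η ∈ HSet n α e → w η = - pullPsi n α e w η


/-!
Write `a, b, x₀` for the stereographic preimages of `ξ, η, ξ₀` and `c = I_{λ,x₀}(b)`. The chordal
distance pulls back as `|𝒮x - 𝒮y|² = 4|x - y|² / ((1 + |x|²)(1 + |y|²))`, and
`J_{λ,ξ₀}(η) = Kⁿ` with `K = (λ / |b - x₀|)² (1 + |b|²) / (1 + |c|²)`. After these substitutions
the claim becomes `λ² |a - b|² < |b - x₀|² |a - c|²`, and the difference of the two sides is
`(λ² - |a - x₀|²)(λ² - |b - x₀|²)`, which is positive because `a, b ∈ B_λ(x₀)`.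
-/

lemma sqrt_pow_div_pow_lt_one_div_pow {K d₁ d₂ : ℝ} {n : ℕ} (hK : 0 ≤ K) (hd₁ : 0 < d₁)
    (hd₂ : 0 ≤ d₂) (hn : n ≠ 0) (h : K * d₁ ^ 2 < d₂ ^ 2) :
    √(K ^ n) / d₂ ^ n < 1 / d₁ ^ n := by
  have hlt : √K * d₁ < d₂ := by
    calc √K * d₁ = √(K * d₁ ^ 2) := by rw [Real.sqrt_mul hK, Real.sqrt_sq hd₁.le]
      _ < √(d₂ ^ 2) := Real.sqrt_lt_sqrt (by positivity) h
      _ = d₂ := Real.sqrt_sq hd₂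
  have hd₂pos : 0 < d₂ := lt_of_le_of_lt (by positivity) hlt
  have hsqrt : √(K ^ n) = √K ^ n := by
    rw [← Real.sqrt_sq (pow_nonneg (Real.sqrt_nonneg K) n), ← pow_mul, mul_comm, pow_mul,
      Real.sq_sqrt hK]
  rw [hsqrt, ← div_pow, ← one_div_pow]
  refine pow_lt_pow_left₀ ?_ (by positivity) hn
  rw [div_lt_div_iff₀ hd₂pos hd₁]
  linarith

lemma norm_sq_mul_norm_sub_inversion_sq {E : Type*} [NormedAddCommGroup E]
    [InnerProductSpace ℝ E] (lam : ℝ) (u : E) {v : E} (hv : v ≠ 0) :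
    ‖v‖ ^ 2 * ‖u - (lam ^ 2 / ‖v‖ ^ 2) • v‖ ^ 2
      = lam ^ 2 * ‖u - v‖ ^ 2 + (lam ^ 2 - ‖u‖ ^ 2) * (lam ^ 2 - ‖v‖ ^ 2) := by
  have hr : ‖v‖ ^ 2 ≠ 0 := by simpa using hv
  rw [norm_sub_sq_real, norm_sub_sq_real, real_inner_smul_right, norm_smul,
    Real.norm_eq_abs, mul_pow, sq_abs]
  field_simp
  ring

lemma sq_div_norm_sq_mul_lt_norm_sub_sphereInversion_sq {n : ℕ} {lam : ℝ}
    {x₀ a b : EuclideanSpace ℝ (Fin n)} (ha : ‖a - x₀‖ < lam) (hb : ‖b - x₀‖ < lam)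
    (hab : a ≠ b) :
    lam ^ 2 / ‖b - x₀‖ ^ 2 * ‖a - b‖ ^ 2 < ‖a - sphereInversion lam x₀ b‖ ^ 2 := by
  rcases eq_or_ne b x₀ with rfl | hbx
  · -- the junk value `λ² / 0 = 0` kills the left side, and `I_{λ,x₀}(x₀) = x₀`
    simpa [sphereInversion] using pow_pos (norm_pos_iff.2 (sub_ne_zero.2 hab)) 2
  have hr : 0 < ‖b - x₀‖ ^ 2 := pow_pos (norm_pos_iff.2 (sub_ne_zero.2 hbx)) 2
  have hI : a - sphereInversion lam x₀ b = (a - x₀) - (lam ^ 2 / ‖b - x₀‖ ^ 2) • (b - x₀) := by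
    rw [sphereInversion]; abel
  have hab' : a - b = (a - x₀) - (b - x₀) := by abel
  have hpos : 0 < (lam ^ 2 - ‖a - x₀‖ ^ 2) * (lam ^ 2 - ‖b - x₀‖ ^ 2) := by
    apply mul_pos <;> nlinarith [norm_nonneg (a - x₀), norm_nonneg (b - x₀)]
  rw [div_mul_eq_mul_div, div_lt_iff₀ hr, mul_comm _ (‖b - x₀‖ ^ 2), hI,
    norm_sq_mul_norm_sub_inversion_sq lam _ (sub_ne_zero.2 hbx), ← hab']
  linarith

section Stereographic

variable {n : ℕ}

def invStereoVec (x : EuclideanSpace ℝ (Fin n)) : EuclideanSpace ℝ (Fin (n + 1)) :=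
  WithLp.toLp 2 (Fin.snoc (fun i => 2 * x i / (1 + ‖x‖ ^ 2)) ((1 - ‖x‖ ^ 2) / (1 + ‖x‖ ^ 2)))

lemma inner_invStereoVec (x y : EuclideanSpace ℝ (Fin n)) :
    ⟪invStereoVec x, invStereoVec y⟫
      = (4 * ⟪x, y⟫ + (1 - ‖x‖ ^ 2) * (1 - ‖y‖ ^ 2)) / ((1 + ‖x‖ ^ 2) * (1 + ‖y‖ ^ 2)) := by
  have hx : 1 + ‖x‖ ^ 2 ≠ 0 := by positivity
  have hy : 1 + ‖y‖ ^ 2 ≠ 0 := by positivity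
  simp only [invStereoVec, PiLp.inner_apply, Fin.sum_univ_castSucc, Fin.snoc_castSucc,
    Fin.snoc_last, RCLike.inner_apply, conj_trivial]
  have hterm : ∀ i, 2 * y i / (1 + ‖y‖ ^ 2) * (2 * x i / (1 + ‖x‖ ^ 2))
      = 4 / ((1 + ‖x‖ ^ 2) * (1 + ‖y‖ ^ 2)) * (y i * x i) := by
    intro i; field_simp; ring
  simp_rw [hterm, ← Finset.mul_sum]
  field_simp

lemma norm_invStereoVec (x : EuclideanSpace ℝ (Fin n)) : ‖invStereoVec x‖ = 1 := by
  have hx : 1 + ‖x‖ ^ 2 ≠ 0 := by positivity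
  have h : ‖invStereoVec x‖ ^ 2 = 1 := by
    rw [← real_inner_self_eq_norm_sq, inner_invStereoVec, real_inner_self_eq_norm_sq]
    field_simp
    ring
  exact (pow_eq_one_iff_of_nonneg (norm_nonneg _) two_ne_zero).1 h

lemma coe_invStereo (x : EuclideanSpace ℝ (Fin n)) :
    (invStereo x : EuclideanSpace ℝ (Fin (n + 1))) = invStereoVec x := by
  change ((mkSph (invStereoVec x) : Sph n) : EuclideanSpace ℝ (Fin (n + 1))) = _
  rw [mkSph, dif_pos (mem_sphere_zero_iff_norm.2 (norm_invStereoVec x))]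

lemma dist_invStereo_sq (x y : EuclideanSpace ℝ (Fin n)) :
    dist (invStereo x) (invStereo y) ^ 2
      = 4 * ‖x - y‖ ^ 2 / ((1 + ‖x‖ ^ 2) * (1 + ‖y‖ ^ 2)) := by
  have hx : 1 + ‖x‖ ^ 2 ≠ 0 := by positivity
  have hy : 1 + ‖y‖ ^ 2 ≠ 0 := by positivity
  rw [Subtype.dist_eq, dist_eq_norm, norm_sub_sq_real, coe_invStereo, coe_invStereo,
    norm_invStereoVec, norm_invStereoVec, inner_invStereoVec, norm_sub_sq_real]
  field_simp
  ring

lemma one_add_coe_last_eq (ξ : Sph n) :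
    1 + (ξ : EuclideanSpace ℝ (Fin (n + 1))) (Fin.last n) = dist ξ (southPole n) ^ 2 / 2 := by
  have hξ : ‖(ξ : EuclideanSpace ℝ (Fin (n + 1)))‖ = 1 := mem_sphere_zero_iff_norm.1 ξ.2
  have hS : ‖(southPole n : EuclideanSpace ℝ (Fin (n + 1)))‖ = 1 :=
    mem_sphere_zero_iff_norm.1 (southPole n).2
  rw [Subtype.dist_eq, dist_eq_norm, norm_sub_sq_real, hξ, hS, southPole,
    EuclideanSpace.inner_single_right]
  simp only [conj_trivial]
  ring

lemma one_add_coe_last_pos {ξ : Sph n} (hξ : ξ ≠ southPole n) :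
    0 < 1 + (ξ : EuclideanSpace ℝ (Fin (n + 1))) (Fin.last n) := by
  rw [one_add_coe_last_eq]
  have := dist_pos.2 hξ
  positivity

lemma sum_coe_castSucc_sq (ξ : Sph n) :
    ∑ i : Fin n, (ξ : EuclideanSpace ℝ (Fin (n + 1))) i.castSucc ^ 2
      = 1 - (ξ : EuclideanSpace ℝ (Fin (n + 1))) (Fin.last n) ^ 2 := by
  have h := EuclideanSpace.real_norm_sq_eq (ξ : EuclideanSpace ℝ (Fin (n + 1)))
  rw [mem_sphere_zero_iff_norm.1 ξ.2, Fin.sum_univ_castSucc] at h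
  linarith

lemma norm_stereoProj_sq {ξ : Sph n} (hξ : ξ ≠ southPole n) :
    ‖stereoProj ξ‖ ^ 2 = (1 - (ξ : EuclideanSpace ℝ (Fin (n + 1))) (Fin.last n)) /
      (1 + (ξ : EuclideanSpace ℝ (Fin (n + 1))) (Fin.last n)) := by
  have ht := (one_add_coe_last_pos hξ).ne'
  rw [EuclideanSpace.real_norm_sq_eq]
  simp only [stereoProj, div_pow]
  rw [← Finset.sum_div, sum_coe_castSucc_sq]
  field_simp
  ring

lemma invStereo_stereoProj {ξ : Sph n} (hξ : ξ ≠ southPole n) :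
    invStereo (stereoProj ξ) = ξ := by
  have ht := (one_add_coe_last_pos hξ).ne'
  apply Subtype.ext
  rw [coe_invStereo]
  ext i
  induction i using Fin.lastCases with
  | last =>
    simp only [invStereoVec, Fin.snoc_last, norm_stereoProj_sq hξ]
    field_simp
    ring
  | cast j =>
    simp only [invStereoVec, Fin.snoc_castSucc]
    rw [norm_stereoProj_sq hξ, stereoProj]
    field_simp
    ring

/-- `J_{λ,ξ₀}(η)^{1/n}`; it is `0` at `η = ξ₀` through the junk value `λ / 0 = 0`. -/
def phiConformalFactor (lam : ℝ) (ξ₀ η : Sph n) : ℝ :=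
  (lam / ‖stereoProj η - stereoProj ξ₀‖) ^ 2 *
    ((1 + ‖stereoProj η‖ ^ 2) / (1 + ‖sphereInversion lam (stereoProj ξ₀) (stereoProj η)‖ ^ 2))

lemma phiConformalFactor_nonneg (lam : ℝ) (ξ₀ η : Sph n) :
    0 ≤ phiConformalFactor lam ξ₀ η := by
  unfold phiConformalFactor
  positivity

lemma jacPhi_eq_pow (lam : ℝ) (ξ₀ η : Sph n) :
    jacPhi n lam ξ₀ η = phiConformalFactor lam ξ₀ η ^ n := by
  rw [jacPhi, stereoJac, stereoJac, invJac, pow_mul, ← mul_pow, ← div_pow, phiConformalFactor]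
  congr 1
  field_simp

lemma phiConformalFactor_mul_dist_sq_lt {lam : ℝ} {ξ₀ ξ η : Sph n}
    (hξ : ξ ∈ SigmaSet n lam ξ₀) (hη : η ∈ SigmaSet n lam ξ₀) (hne : ξ ≠ η) :
    phiConformalFactor lam ξ₀ η * dist ξ η ^ 2 < dist ξ (PhiMap n lam ξ₀ η) ^ 2 := by
  obtain ⟨hξS, ha⟩ := hξ
  obtain ⟨hηS, hb⟩ := hη
  have hab : stereoProj ξ ≠ stereoProj η := fun h =>
    hne (by rw [← invStereo_stereoProj hξS, ← invStereo_stereoProj hηS, h])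
  have hd₁ := dist_invStereo_sq (stereoProj ξ) (stereoProj η)
  have hd₂ := dist_invStereo_sq (stereoProj ξ) (sphereInversion lam (stereoProj ξ₀) (stereoProj η))
  rw [invStereo_stereoProj hξS, invStereo_stereoProj hηS] at hd₁
  rw [invStereo_stereoProj hξS] at hd₂
  rw [hd₁, PhiMap, hd₂, phiConformalFactor]
  set x₀ := stereoProj ξ₀
  set a := stereoProj ξ
  set b := stereoProj η
  set c := sphereInversion lam x₀ b
  have hPa : 0 < 1 + ‖a‖ ^ 2 := by positivity
  have hPb : 0 < 1 + ‖b‖ ^ 2 := by positivity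
  have hPc : 0 < 1 + ‖c‖ ^ 2 := by positivity
  calc (lam / ‖b - x₀‖) ^ 2 * ((1 + ‖b‖ ^ 2) / (1 + ‖c‖ ^ 2)) *
        (4 * ‖a - b‖ ^ 2 / ((1 + ‖a‖ ^ 2) * (1 + ‖b‖ ^ 2)))
      = lam ^ 2 / ‖b - x₀‖ ^ 2 * ‖a - b‖ ^ 2 * (4 / ((1 + ‖a‖ ^ 2) * (1 + ‖c‖ ^ 2))) := by
        rw [div_pow]; field_simp
    _ < ‖a - c‖ ^ 2 * (4 / ((1 + ‖a‖ ^ 2) * (1 + ‖c‖ ^ 2))) :=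
        mul_lt_mul_of_pos_right
          (sq_div_norm_sq_mul_lt_norm_sub_sphereInversion_sq ha hb hab) (by positivity)
    _ = 4 * ‖a - c‖ ^ 2 / ((1 + ‖a‖ ^ 2) * (1 + ‖c‖ ^ 2)) := by ring

end Stereographic

theorem kernel_difference_neg_inversion (n : ℕ) (hn : 1 ≤ n) (lam : ℝ) (ξ₀ : Sph n) :
    ∀ ξ ∈ SigmaSet n lam ξ₀, ∀ η ∈ SigmaSet n lam ξ₀, ξ ≠ η →
      Real.sqrt (jacPhi n lam ξ₀ η) / dist ξ (PhiMap n lam ξ₀ η) ^ n -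
          1 / dist ξ η ^ n < 0 := by
  intro ξ hξ η hη hne
  rw [jacPhi_eq_pow, sub_neg]
  exact sqrt_pow_div_pow_lt_one_div_pow (phiConformalFactor_nonneg lam ξ₀ η) (dist_pos.2 hne)
    dist_nonneg (by omega) (phiConformalFactor_mul_dist_sq_lt hξ hη hne)

end
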